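/- For any distribution μ supported on a finite set A with |A| ≥ 2, letting d = ‖μ − U_A‖₁, one has log|A| − H(μ) ≤ (d/2)·log|A| + sqrt(2·log e · d · log|A|). -/

import Mathlib

/-!
In nats, with `u = 1/|A|`, the deficiency `log|A| - H(μ)` is `∑ₐ μ a · log (μ a / u)`.
A term with `μ a ≤ u` is nonpositive. For `m = μ a > u` the term equals
`(m - u) · log|A| + (m log m - u log u)`, and `m log m - u log u` is bounded both by `m - u`
(as `log x ≤ x - 1`) and by `u log|A|` (as `m log m ≤ 0`), hence by the geometric mean
`√((m - u) · u log|A|)`. The excesses `(μ a - u)⁺` sum to `d/2`, so Cauchy–Schwarz bounds the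
deficiency by `d/2 · log|A| + √(d/2 · log|A|)`; dividing by `log 2` gives the claim with a
factor 4 to spare under the root.
-/

open Finset

/-- `μ` is a probability distribution on the finite type `A`. -/
def IsDist {A : Type*} [Fintype A] (μ : A → ℝ) : Prop :=
  (∀ a, 0 ≤ μ a) ∧ ∑ a, μ a = 1

/-- Base-2 Shannon entropy of a distribution. -/
noncomputable def shannonH {A : Type*} [Fintype A] (μ : A → ℝ) : ℝ :=
  ∑ a, μ a * Real.logb 2 (μ a)⁻¹

open Real

lemma le_sqrt_mul_of_le_of_le {x a b : ℝ} (ha : x ≤ a) (hb : x ≤ b) : x ≤ √(a * b) := by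
  rcases le_or_gt x 0 with hx | hx
  · exact hx.trans (sqrt_nonneg _)
  · exact le_sqrt_of_sq_le (by nlinarith)

lemma mul_log_sub_mul_log_le_sub {u m : ℝ} (hu : 0 < u) (hum : u ≤ m) (hm : m ≤ 1) :
    m * log m - u * log u ≤ m - u := by
  have hm0 : 0 < m := hu.trans_le hum
  have hlog : u * (log m - log u) ≤ m - u := by
    calc u * (log m - log u) = u * log (m / u) := by rw [log_div hm0.ne' hu.ne']
      _ ≤ u * (m / u - 1) := by gcongr; exact log_le_sub_one_of_pos (by positivity)
      _ = m - u := by field_simp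
  have : (m - u) * log m ≤ 0 := mul_nonpos_of_nonneg_of_nonpos (by linarith) (log_nonpos hm0.le hm)
  linarith

lemma mul_log_sub_mul_log_le_sqrt {u m : ℝ} (hu : 0 < u) (hum : u ≤ m) (hm : m ≤ 1) :
    m * log m - u * log u ≤ √((m - u) * (u * log u⁻¹)) := by
  refine le_sqrt_mul_of_le_of_le (mul_log_sub_mul_log_le_sub hu hum hm) ?_
  rw [log_inv]
  linarith [mul_log_nonpos (hu.le.trans hum) hm]

lemma mul_log_add_mul_log_inv_le {u m : ℝ} (hu : 0 < u) (hm0 : 0 ≤ m) (hm1 : m ≤ 1) :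
    m * log m + m * log u⁻¹ ≤ (m - u)⁺ * log u⁻¹ + √((m - u)⁺ * (u * log u⁻¹)) := by
  rcases le_or_gt m u with hmu | hum
  · rw [posPart_eq_zero.mpr (sub_nonpos.mpr hmu), zero_mul, zero_mul, sqrt_zero, add_zero,
      log_inv, mul_neg, ← sub_eq_add_neg, ← mul_sub]
    rcases hm0.eq_or_lt with rfl | hm0
    · simp
    · exact mul_nonpos_of_nonneg_of_nonpos hm0.le (sub_nonpos.mpr (log_le_log hm0 hmu))
  · rw [posPart_eq_self.mpr (sub_nonneg.mpr hum.le)]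
    have := mul_log_sub_mul_log_le_sqrt hu hum.le hm1
    rw [log_inv] at this ⊢
    linarith

lemma sum_posPart_sub_eq_half_sum_abs_sub {ι : Type*} (s : Finset ι) {f g : ι → ℝ}
    (h : ∑ i ∈ s, f i = ∑ i ∈ s, g i) :
    ∑ i ∈ s, (f i - g i)⁺ = (∑ i ∈ s, |f i - g i|) / 2 := by
  have hsub : ∑ i ∈ s, ((f i - g i)⁺ - (f i - g i)⁻) = 0 := by
    simp only [posPart_sub_negPart, sum_sub_distrib, h, sub_self]
  have hadd : ∑ i ∈ s, ((f i - g i)⁺ + (f i - g i)⁻) = ∑ i ∈ s, |f i - g i| := by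
    simp only [posPart_add_negPart]
  rw [sum_sub_distrib] at hsub
  rw [← hadd, sum_add_distrib]
  linarith

lemma IsDist.nonempty {A : Type*} [Fintype A] {μ : A → ℝ} (hμ : IsDist μ) : Nonempty A :=
  univ_nonempty_iff.mp (nonempty_of_sum_ne_zero (hμ.2.trans_ne one_ne_zero))

lemma IsDist.le_one {A : Type*} [Fintype A] {μ : A → ℝ} (hμ : IsDist μ) (a : A) : μ a ≤ 1 :=
  hμ.2 ▸ single_le_sum (fun b _ ↦ hμ.1 b) (mem_univ a)

theorem sum_mul_log_add_log_card_le {A : Type*} [Fintype A] {μ : A → ℝ} (hμ : IsDist μ) :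
    ∑ a, μ a * log (μ a) + log (Fintype.card A)
      ≤ (∑ a, |μ a - (Fintype.card A : ℝ)⁻¹|) / 2 * log (Fintype.card A)
        + √((∑ a, |μ a - (Fintype.card A : ℝ)⁻¹|) / 2 * log (Fintype.card A)) := by
  have := hμ.nonempty
  set n : ℝ := (Fintype.card A : ℝ)
  set u := n⁻¹
  set L := log u⁻¹
  have hu : 0 < u := inv_pos.mpr (by positivity)
  have hL : log n = L := by simp only [L, u, inv_inv]
  have hL0 : 0 ≤ L := hL ▸ log_natCast_nonneg _
  have hsum_u : ∑ _a : A, u = 1 := by simp [u, n]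
  have hexcess : ∑ a, (μ a - u)⁺ = (∑ a, |μ a - u|) / 2 :=
    sum_posPart_sub_eq_half_sum_abs_sub _ (hμ.2.trans hsum_u.symm)
  rw [hL, ← hexcess]
  have hCS : ∑ a, √((μ a - u)⁺) * √(u * L) ≤ √(∑ a, (μ a - u)⁺) * √L := by
    have hsum_uL : ∑ _a : A, u * L = L := by rw [← sum_mul, hsum_u, one_mul]
    simpa only [hsum_uL] using
      sum_sqrt_mul_sqrt_le univ (fun a ↦ posPart_nonneg (μ a - u)) (fun _ ↦ mul_nonneg hu.le hL0)
  calc ∑ a, μ a * log (μ a) + L = ∑ a, (μ a * log (μ a) + μ a * L) := by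
        rw [sum_add_distrib, ← sum_mul, hμ.2, one_mul]
    _ ≤ ∑ a, ((μ a - u)⁺ * L + √((μ a - u)⁺ * (u * L))) :=
        sum_le_sum fun a _ ↦ mul_log_add_mul_log_inv_le hu (hμ.1 a) (hμ.le_one a)
    _ = (∑ a, (μ a - u)⁺) * L + ∑ a, √((μ a - u)⁺) * √(u * L) := by
        simp only [sum_add_distrib, sum_mul, sqrt_mul (posPart_nonneg _)]
    _ ≤ (∑ a, (μ a - u)⁺) * L + √((∑ a, (μ a - u)⁺) * L) := by
        rw [sqrt_mul (sum_nonneg fun a _ ↦ posPart_nonneg _)]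
        gcongr

lemma shannonH_eq_neg_sum_mul_log_div_log_two {A : Type*} [Fintype A] (μ : A → ℝ) :
    shannonH μ = -(∑ a, μ a * log (μ a)) / log 2 := by
  simp only [shannonH, logb, log_inv, ← sum_neg_distrib, sum_div]
  exact sum_congr rfl fun a _ ↦ by ring

theorem entropy_deficiency_upper_bound {A : Type*} [Fintype A]
    (μ : A → ℝ) (hμ : IsDist μ)
    (d : ℝ) (hd : ∑ a, |μ a - ((Fintype.card A : ℝ))⁻¹| = d) :
    Real.logb 2 (Fintype.card A) - shannonH μ
      ≤ d / 2 * Real.logb 2 (Fintype.card A)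
        + Real.sqrt (2 * Real.logb 2 (Real.exp 1) * d * Real.logb 2 (Fintype.card A)) := by
  have hd0 : 0 ≤ d := hd ▸ sum_nonneg fun a _ ↦ abs_nonneg _
  have hL0 : 0 ≤ log (Fintype.card A) := log_natCast_nonneg _
  have hsqrt : √(2 * logb 2 (exp 1) * d * logb 2 (Fintype.card A))
      = √(2 * d * log (Fintype.card A)) / log 2 := by
    rw [logb, logb, log_exp, ← sqrt_sq (log_pos one_lt_two).le, ← sqrt_div' _ (by positivity),
      sqrt_sq (log_pos one_lt_two).le]
    congr 1
    field_simp
  calc logb 2 (Fintype.card A) - shannonH μ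
      = (∑ a, μ a * log (μ a) + log (Fintype.card A)) / log 2 := by
        rw [shannonH_eq_neg_sum_mul_log_div_log_two, logb]; ring
    _ ≤ (d / 2 * log (Fintype.card A) + √(d / 2 * log (Fintype.card A))) / log 2 := by
        gcongr ?_ / _
        exact hd ▸ sum_mul_log_add_log_card_le hμ
    _ ≤ (d / 2 * log (Fintype.card A) + √(2 * d * log (Fintype.card A))) / log 2 := by
        gcongr
        linarith [mul_nonneg hd0 hL0]
    _ = _ := by rw [hsqrt, logb]; ring
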